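/- Let l ≥ 4 be an integer, let G ∈ 𝒢_l and let C be an odd hole of G. If there is a jump over C, then G contains a short jump over C or a local jump over C across one vertex. -/

import Mathlib

open SimpleGraph

variable {V : Type*}

/-- The set of internal vertices of a walk from `x` to `y`. -/
def wInterior {G : SimpleGraph V} {x y : V} (P : G.Walk x y) : Set V :=
  {a | a ∈ P.support ∧ a ≠ x ∧ a ≠ y}

/-- `P` is an induced path of `G`. -/
def IsInducedPath (G : SimpleGraph V) {x y : V} (P : G.Walk x y) : Prop :=
  P.IsPath ∧ ∀ a ∈ P.support, ∀ b ∈ P.support, G.Adj a b → s(a, b) ∈ P.edges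

/-- A hole of `G`: an induced cycle of length at least 4. -/
def IsHole (G : SimpleGraph V) {v : V} (w : G.Walk v v) : Prop :=
  w.IsCycle ∧ 4 ≤ w.length ∧
    ∀ a ∈ w.support, ∀ b ∈ w.support, G.Adj a b → s(a, b) ∈ w.edges

/-- An odd hole of `G`. -/
def IsOddHole (G : SimpleGraph V) {v : V} (w : G.Walk v v) : Prop :=
  IsHole G w ∧ Odd w.length

/-- `G` belongs to the family `𝒢ₗ`: it has girth `2l+1` and
no odd hole of length at least `2l+3`. -/
def MemGFam (G : SimpleGraph V) (l : ℕ) : Prop :=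
  G.girth = (2 * l + 1 : ℕ) ∧
    ∀ (v : V) (w : G.Walk v v), IsOddHole G w → w.length < 2 * l + 3

/-- `G` is `k`-vertex-critical. -/
def IsVertexCritical (G : SimpleGraph V) (k : ℕ) : Prop :=
  G.chromaticNumber = k ∧
    ∀ v : V, (G.induce {u | u ≠ v}).chromaticNumber < k

/-- `S` is a vertex cut of `G`: deleting `S` leaves a disconnected graph. -/
def IsVertexCut (G : SimpleGraph V) (S : Set V) : Prop :=
  ¬ (G.induce Sᶜ).Preconnected

/-- `G` has a `K2`-cut. -/
def HasK2Cut (G : SimpleGraph V) : Prop :=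
  ∃ u v : V, G.Adj u v ∧ IsVertexCut G {u, v}

/-- `G` has a `P3`-cut. -/
def HasP3Cut (G : SimpleGraph V) : Prop :=
  ∃ u v w : V, u ≠ w ∧ G.Adj u v ∧ G.Adj v w ∧ ¬ G.Adj u w ∧ IsVertexCut G {u, v, w}

/-- `G` has a 2-edge-cut: two edges whose removal disconnects the graph. -/
def Has2EdgeCut (G : SimpleGraph V) : Prop :=
  ∃ e f : Sym2 V, e ≠ f ∧ e ∈ G.edgeSet ∧ f ∈ G.edgeSet ∧
    ¬ (G.deleteEdges {e, f}).Preconnected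

/-- `Q1`, `Q2` are the two internally disjoint `(x,y)`-paths of the cycle `w`. -/
def ArcsOf (G : SimpleGraph V) {v x y : V} (w : G.Walk v v) (Q1 Q2 : G.Walk x y) : Prop :=
  x ∈ w.support ∧ y ∈ w.support ∧ x ≠ y ∧ Q1.IsPath ∧ Q2.IsPath ∧
    ({a | a ∈ Q1.support} ∩ {a | a ∈ Q2.support} = {x, y}) ∧
    ({e | e ∈ w.edges} = {e | e ∈ Q1.edges} ∪ {e | e ∈ Q2.edges})

/-- `P` is a chordal path of the hole `w`: `w ∪ P` is an induced theta-subgraph of `G`. -/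
def IsChordalPath (G : SimpleGraph V) {v x y : V} (w : G.Walk v v) (P : G.Walk x y) : Prop :=
  IsHole G w ∧ P.IsPath ∧ 2 ≤ P.length ∧ x ∈ w.support ∧ y ∈ w.support ∧ x ≠ y ∧
    (∀ a ∈ wInterior P, a ∉ w.support) ∧
    (∀ a, (a ∈ w.support ∨ a ∈ P.support) → ∀ b, (b ∈ w.support ∨ b ∈ P.support) →
      G.Adj a b → (s(a, b) ∈ w.edges ∨ s(a, b) ∈ P.edges))

/-- `P` is an `(s,t)`-jump over the hole `w`. -/
def IsJump (G : SimpleGraph V) {v s t : V} (w : G.Walk v v) (P : G.Walk s t) : Prop :=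
  IsHole G w ∧ s ∈ w.support ∧ t ∈ w.support ∧ s ≠ t ∧ ¬ G.Adj s t ∧
    IsInducedPath G P ∧ ∀ a ∈ wInterior P, a ∉ w.support

/-- `P` is a local jump over `w` across the interior of the arc `Q1`
(`Q1`, `Q2` being the two arcs of `w` between the ends of `P`). -/
def IsLocalJumpAcross (G : SimpleGraph V) {v s t : V} (w : G.Walk v v)
    (P Q1 Q2 : G.Walk s t) : Prop :=
  IsJump G w P ∧ ArcsOf G w Q1 Q2 ∧
    (∃ a ∈ wInterior Q1, ∃ b ∈ wInterior P, G.Adj a b) ∧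
    (∀ a ∈ wInterior Q2, ∀ b ∈ wInterior P, ¬ G.Adj a b)

/-- `P` is a local jump over `w`. -/
def IsLocalJump (G : SimpleGraph V) {v s t : V} (w : G.Walk v v) (P : G.Walk s t) : Prop :=
  ∃ Q1 Q2 : G.Walk s t, IsLocalJumpAcross G w P Q1 Q2

/-- `P` is a local jump over `w` across one vertex. -/
def IsLocalJumpAcrossOne (G : SimpleGraph V) {v s t : V} (w : G.Walk v v)
    (P : G.Walk s t) : Prop :=
  ∃ Q1 Q2 : G.Walk s t, IsLocalJumpAcross G w P Q1 Q2 ∧ Q1.length = 2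

/-- `P` is a short jump over `w`: no internal vertex of either arc of `w`
has a neighbour among the internal vertices of `P`. -/
def IsShortJump (G : SimpleGraph V) {v s t : V} (w : G.Walk v v) (P : G.Walk s t) : Prop :=
  IsJump G w P ∧
    ∀ a ∈ w.support, a ≠ s → a ≠ t → ∀ b ∈ wInterior P, ¬ G.Adj a b

/-- `P` is a short jump over `w` across the interior of `Q1`, i.e. `P ∪ Q1` is an
odd hole (a jump hole over `w`). -/
def IsShortJumpAcross (G : SimpleGraph V) {v s t : V} (w : G.Walk v v)
    (P Q1 Q2 : G.Walk s t) : Prop :=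
  IsShortJump G w P ∧ ArcsOf G w Q1 Q2 ∧ IsOddHole G (P.append Q1.reverse)

/-- `x` lies in some jump hole over `w`. -/
def InJumpHoleOver (G : SimpleGraph V) {v : V} (w : G.Walk v v) (x : V) : Prop :=
  ∃ (s t : V) (P Q1 Q2 : G.Walk s t),
    IsShortJumpAcross G w P Q1 Q2 ∧ (x ∈ P.support ∨ x ∈ Q1.support)

/-- `a`, `b`, `c`, `d` appear on the cycle `w` in this cyclic order. -/
def CyclicOrder4 (G : SimpleGraph V) {v : V} (w : G.Walk v v) (a b c d : V) : Prop :=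
  ∃ n : ℕ, List.Sublist [a, b, c, d] (w.support.tail.rotate n)

/-- A `K4`-subdivision in `G`: four distinct branch vertices joined by six
internally disjoint paths (the arrises). -/
structure K4Sub (G : SimpleGraph V) where
  u1 : V
  u2 : V
  u3 : V
  u4 : V
  P1 : G.Walk u1 u2
  P2 : G.Walk u3 u4
  Q1 : G.Walk u2 u3
  Q2 : G.Walk u1 u4
  L1 : G.Walk u1 u3
  L2 : G.Walk u2 u4
  hu : List.Nodup [u1, u2, u3, u4]
  hP1 : P1.IsPath
  hP2 : P2.IsPath
  hQ1 : Q1.IsPath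
  hQ2 : Q2.IsPath
  hL1 : L1.IsPath
  hL2 : L2.IsPath
  hP : ∀ a ∈ P1.support, a ∉ P2.support
  hQ : ∀ a ∈ Q1.support, a ∉ Q2.support
  hL : ∀ a ∈ L1.support, a ∉ L2.support

namespace K4Sub

variable {G : SimpleGraph V}

/-- The face cycle `C1 = P1 ∪ Q1 ∪ L1`. -/
def C1 (H : K4Sub G) : G.Walk H.u1 H.u1 := (H.P1.append H.Q1).append H.L1.reverse
/-- The face cycle `C2 = P1 ∪ Q2 ∪ L2`. -/
def C2 (H : K4Sub G) : G.Walk H.u1 H.u1 := (H.P1.append H.L2).append H.Q2.reverse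
/-- The face cycle `C3 = P2 ∪ Q1 ∪ L2`. -/
def C3 (H : K4Sub G) : G.Walk H.u2 H.u2 := (H.Q1.append H.P2).append H.L2.reverse
/-- The face cycle `C4 = C1 △ C2 △ C3 = P2 ∪ Q2 ∪ L1`. -/
def C4 (H : K4Sub G) : G.Walk H.u1 H.u1 := (H.L1.append H.P2).append H.Q2.reverse

/-- The vertex set of the subdivision. -/
def verts (H : K4Sub G) : Set V :=
  {a | a ∈ H.P1.support ∨ a ∈ H.P2.support ∨ a ∈ H.Q1.support ∨
       a ∈ H.Q2.support ∨ a ∈ H.L1.support ∨ a ∈ H.L2.support}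

/-- The edge set of the subdivision. -/
def edges (H : K4Sub G) : Set (Sym2 V) :=
  {e | e ∈ H.P1.edges ∨ e ∈ H.P2.edges ∨ e ∈ H.Q1.edges ∨
       e ∈ H.Q2.edges ∨ e ∈ H.L1.edges ∨ e ∈ H.L2.edges}

end K4Sub

/-- `H` is an odd `K4`-subdivision: all four face cycles are odd holes. -/
def IsOddK4 (G : SimpleGraph V) (H : K4Sub G) : Prop :=
  IsOddHole G H.C1 ∧ IsOddHole G H.C2 ∧ IsOddHole G H.C3 ∧ IsOddHole G H.C4

/-- `G` has an odd `K4`-subdivision. -/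
def HasOddK4 (G : SimpleGraph V) : Prop := ∃ H : K4Sub G, IsOddK4 G H

/-- `H` is a balanced `K4`-subdivision of type `(1,2)`. -/
def IsBalancedK4 (G : SimpleGraph V) (H : K4Sub G) : Prop :=
  IsOddHole G H.C1 ∧ IsOddHole G H.C2 ∧
    IsHole G H.C3 ∧ Even H.C3.length ∧ IsHole G H.C4 ∧ Even H.C4.length ∧
    H.Q1.length = 1 ∧ 2 ≤ H.L2.length

/-- `G` contains a balanced `K4`-subdivision of type `(1,2)`. -/
def HasBalancedK4 (G : SimpleGraph V) : Prop := ∃ H : K4Sub G, IsBalancedK4 G H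

/-- `P` is a direct connection linking the (vertex sets of) two disjoint induced
subgraphs `S1` and `S2`. -/
def IsDirectConnection (G : SimpleGraph V) (S1 S2 : Set V) {v1 v2 : V}
    (P : G.Walk v1 v2) : Prop :=
  IsInducedPath G P ∧ (∀ x ∈ P.support, x ∉ S1 ∧ x ∉ S2) ∧
    (∃ y ∈ S1, G.Adj v1 y) ∧ (∃ y ∈ S2, G.Adj v2 y) ∧
    (∀ x ∈ P.support, (∃ y ∈ S1, G.Adj x y) → x = v1) ∧
    (∀ x ∈ P.support, (∃ y ∈ S2, G.Adj x y) → x = v2)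

/-- `P` is a minimal direct connection linking `S1` and `S2`. -/
def IsMinimalDirectConnection (G : SimpleGraph V) (S1 S2 : Set V) {v1 v2 : V}
    (P : G.Walk v1 v2) : Prop :=
  IsDirectConnection G S1 S2 P ∧
    ∀ (w1 w2 : V) (P' : G.Walk w1 w2), IsDirectConnection G S1 S2 P' →
      (∀ x ∈ P'.support, x ∈ P.support) → ∀ x ∈ P.support, x ∈ P'.support

/-! Take a jump `P` over `C` of minimum length, with ends `s`, `t`. Suppose a vertex `c` of `C`
other than `s`, `t` has a neighbour `b` in `P*`. If `c ≁ s`, the initial segment of `P` up to the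
first neighbour of `c`, followed by `c`, is an `(s,c)`-jump, so by minimality `b` is the
penultimate vertex of `P`. Hence if `c` missed `s` or `t`, we would get a triangle, or a common
neighbour of `s` and `t` off `C`, closing cycles of lengths summing to `|C| + 4 ≤ 2l + 6`; both are
impossible at girth `2l + 1` with `l ≥ 4`. So every such `c` is adjacent to `s` and `t`, it is unique
because two of them would span a 4-cycle, and `P` is a local jump across `c`. -/

namespace SimpleGraph

variable {G : SimpleGraph V} {u v s t : V}

lemma egirth_le_length_add_length {p q : G.Walk u v} (hp : p.IsPath) (hq : q.IsPath)
    (hpq : p ≠ q) : G.egirth ≤ p.length + q.length := by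
  obtain ⟨x, -, -, c, hc, hlen⟩ := hp.exists_isCycle_length_le_add_of_ne hq hpq
  exact (egirth_le_length hc).trans (by exact_mod_cast hlen)

lemma egirth_le_three {a b c : V} (hab : G.Adj a b) (hbc : G.Adj b c) (hca : G.Adj c a) :
    G.egirth ≤ 3 := by
  have hpath : (Walk.cons hab hbc.toWalk).IsPath :=
    hbc.isPath_toWalk.cons (by simp [hab.ne, hca.ne'])
  have hne : hca.symm.toWalk ≠ Walk.cons hab hbc.toWalk := fun h => by
    simpa using congrArg Walk.length h
  exact (egirth_le_length_add_length hca.symm.isPath_toWalk hpath hne).trans_eq (by norm_num)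

lemma egirth_le_four {c c' : V} (hsc : G.Adj s c) (hct : G.Adj c t) (hsc' : G.Adj s c')
    (hc't : G.Adj c' t) (hst : s ≠ t) (hcc' : c ≠ c') : G.egirth ≤ 4 := by
  have hpath : ∀ {x}, (hsx : G.Adj s x) → (hxt : G.Adj x t) →
      (Walk.cons hsx hxt.toWalk).IsPath := fun hsx hxt =>
    hxt.isPath_toWalk.cons (by simp [hsx.ne, hst])
  have hne : Walk.cons hsc hct.toWalk ≠ Walk.cons hsc' hc't.toWalk := fun h => by
    simpa [hcc'] using congrArg Walk.support h
  exact (egirth_le_length_add_length (hpath hsc hct) (hpath hsc' hc't) hne).trans_eq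
    (by norm_num)

lemma Walk.IsPath.length_eq_two_of_mem_edges {c : V} {p : G.Walk u v} (hp : p.IsPath)
    (huc : s(u, c) ∈ p.edges) (hcv : s(c, v) ∈ p.edges) : p.length = 2 := by
  have hsnd : c = p.getVert 1 := hp.eq_snd_of_mem_edges huc
  have hpen : c = p.getVert (p.length - 1) :=
    hp.eq_penultimate_of_mem_edges (Sym2.eq_swap ▸ hcv)
  have hpos : 0 < p.length := p.length_edges ▸ List.length_pos_of_mem huc
  have := hp.getVert_injOn (by simp; omega) (by simp) (hsnd.symm.trans hpen)
  omega

lemma Walk.IsCycle.exists_arcsOf {w : G.Walk v v} (hw : w.IsCycle) (hs : s ∈ w.support)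
    (ht : t ∈ w.support) (hst : s ≠ t) :
    ∃ Q1 Q2 : G.Walk s t, ArcsOf G w Q1 Q2 ∧ Q1.length + Q2.length = w.length ∧
      (∀ x ∈ Q1.support, x ∈ w.support) ∧ ∀ x ∈ Q2.support, x ∈ w.support := by
  classical
  obtain ⟨c, hcw⟩ : ∃ c, w.rotate s hs = c := ⟨_, rfl⟩
  have hc : c.IsCycle := hcw ▸ hw.rotate hs
  have hmem : ∀ x, x ∈ c.support ↔ x ∈ w.support := fun x => hcw ▸ w.mem_support_rotate_iff s hs
  have htc : t ∈ c.support := (hmem t).2 ht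
  set Q := c.takeUntil t htc
  set R := c.dropUntil t htc
  have hspec : Q.append R = c := c.take_spec htc
  have hQ : Q.IsPath := hc.isPath_takeUntil htc
  have hR : R.IsPath := (hspec ▸ hc).isPath_of_append_right (Walk.not_nil_of_ne hst)
  have htails : (Q.support.tail ++ R.support.tail).Nodup := by
    simpa [← hspec, Walk.tail_support_append] using hc.support_nodup
  refine ⟨Q, R.reverse, ⟨hs, ht, hst, hQ, hR.reverse, ?_, ?_⟩, ?_, ?_, ?_⟩
  · ext x
    simp only [Set.mem_inter_iff, Set.mem_ofPred_eq, Walk.support_reverse, List.mem_reverse,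
      Set.mem_insert_iff, Set.mem_singleton_iff]
    refine ⟨fun ⟨hxQ, hxR⟩ => ?_, ?_⟩
    · rw [← Walk.cons_tail_support, List.mem_cons] at hxQ hxR
      rcases hxQ with rfl | hxQ
      · exact Or.inl rfl
      rcases hxR with rfl | hxR
      · exact Or.inr rfl
      exact (List.disjoint_of_nodup_append htails hxQ hxR).elim
    · rintro (rfl | rfl)
      · exact ⟨Q.start_mem_support, R.end_mem_support⟩
      · exact ⟨Q.end_mem_support, R.start_mem_support⟩
  · have hperm : c.edges.Perm w.edges := hcw ▸ (w.rotate_edges s hs).perm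
    ext e
    rw [Set.mem_ofPred_eq, ← hperm.mem_iff, ← hspec, Walk.edges_append]
    simp
  · rw [Walk.length_reverse, ← w.length_rotate s hs, hcw, ← hspec, Walk.length_append]
  · exact fun x hx => (hmem x).1 (c.support_takeUntil_subset_support htc hx)
  · intro x hx
    rw [Walk.support_reverse, List.mem_reverse] at hx
    exact (hmem x).1 (c.support_dropUntil_subset_support htc hx)

lemma Walk.IsCycle.two_mul_egirth_le_length_add_four {w : G.Walk v v} (hw : w.IsCycle)
    (hs : s ∈ w.support) (ht : t ∈ w.support) (hst : s ≠ t) {b : V} (hb : b ∉ w.support)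
    (hbs : G.Adj b s) (hbt : G.Adj b t) : 2 * G.egirth ≤ w.length + 4 := by
  obtain ⟨Q1, Q2, ⟨-, -, -, hQ1, hQ2, -⟩, hlen, hQ1w, hQ2w⟩ := hw.exists_arcsOf hs ht hst
  have hdetour : (Walk.cons hbs.symm hbt.toWalk).IsPath :=
    hbt.isPath_toWalk.cons (by simp [hbs.ne', hst])
  have harc : ∀ Q : G.Walk s t, Q.IsPath → (∀ x ∈ Q.support, x ∈ w.support) →
      G.egirth ≤ Q.length + 2 := fun Q hQ hQw => by
    have hne : Q ≠ Walk.cons hbs.symm hbt.toWalk := fun h => hb (hQw b (by simp [h]))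
    simpa using egirth_le_length_add_length hQ hdetour hne
  calc 2 * G.egirth = G.egirth + G.egirth := two_mul _
    _ ≤ (Q1.length + 2) + (Q2.length + 2) :=
      add_le_add (harc Q1 hQ1 hQ1w) (harc Q2 hQ2 hQ2w)
    _ = w.length + 4 := by rw [← hlen]; push_cast; ring

end SimpleGraph

lemma ArcsOf.symm {G : SimpleGraph V} {v x y : V} {w : G.Walk v v} {Q1 Q2 : G.Walk x y}
    (h : ArcsOf G w Q1 Q2) : ArcsOf G w Q2 Q1 := by
  obtain ⟨hx, hy, hxy, hQ1, hQ2, hsupp, hedges⟩ := h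
  exact ⟨hx, hy, hxy, hQ2, hQ1, Set.inter_comm _ _ ▸ hsupp, Set.union_comm _ _ ▸ hedges⟩

section Jumps

variable {G : SimpleGraph V} {v s t : V} {w : G.Walk v v}

lemma mem_wInterior_reverse {x : V} {P : G.Walk s t} :
    x ∈ wInterior P.reverse ↔ x ∈ wInterior P := by
  simp only [wInterior, Set.mem_ofPred_eq, Walk.support_reverse, List.mem_reverse]
  tauto

lemma IsInducedPath.reverse {P : G.Walk s t} (h : IsInducedPath G P) :
    IsInducedPath G P.reverse :=
  ⟨h.1.reverse, fun a ha b hb hab => by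
    simpa using h.2 a (by simpa using ha) b (by simpa using hb) hab⟩

lemma IsInducedPath.of_append_left {x : V} {p : G.Walk s x} {q : G.Walk x t}
    (h : IsInducedPath G (p.append q)) : IsInducedPath G p := by
  refine ⟨h.1.of_append_left, fun a ha b hb hab => ?_⟩
  have hedge := h.2 a ((p.mem_support_append_iff q).2 (Or.inl ha))
    b ((p.mem_support_append_iff q).2 (Or.inl hb)) hab
  rw [Walk.edges_append, List.mem_append] at hedge
  refine hedge.resolve_right fun hq => ?_
  by_cases hax : a = x
  · exact h.1.ne_of_mem_support_of_append (fun hbx => hab.ne (hax.trans hbx.symm)) hb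
      (q.snd_mem_support_of_mem_edges hq) rfl
  · exact h.1.ne_of_mem_support_of_append hax ha (q.fst_mem_support_of_mem_edges hq) rfl

lemma IsInducedPath.take {P : G.Walk s t} (h : IsInducedPath G P) (n : ℕ) :
    IsInducedPath G (P.take n) :=
  IsInducedPath.of_append_left ((P.append_take_drop_eq n).symm ▸ h)

lemma IsInducedPath.concat {x y : V} {p : G.Walk s x} (hp : IsInducedPath G p)
    (hxy : G.Adj x y) (hy : y ∉ p.support) (hnbr : ∀ z ∈ p.support, G.Adj z y → z = x) :
    IsInducedPath G (p.concat hxy) := by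
  refine ⟨hp.1.concat hy hxy, fun a ha b hb hab => ?_⟩
  simp only [Walk.support_concat, List.mem_append,
    List.mem_singleton] at ha hb
  rw [Walk.edges_concat, List.concat_eq_append, List.mem_append, List.mem_singleton]
  rcases ha with ha | rfl <;> rcases hb with hb | rfl
  · exact Or.inl (hp.2 a ha b hb hab)
  · exact Or.inr (by rw [hnbr a ha hab])
  · exact Or.inr (by rw [hnbr b hb hab.symm, Sym2.eq_swap])
  · exact (hab.ne rfl).elim

lemma IsJump.reverse {P : G.Walk s t} (h : IsJump G w P) : IsJump G w P.reverse := by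
  obtain ⟨hw, hs, ht, hst, hadj, hind, hint⟩ := h
  exact ⟨hw, ht, hs, hst.symm, fun h => hadj h.symm, hind.reverse,
    fun x hx => hint x (mem_wInterior_reverse.1 hx)⟩

lemma IsJump.take_concat {P : G.Walk s t} (hP : IsJump G w P) {c : V} (hc : c ∈ w.support)
    (hcs : c ≠ s) (hsc : ¬ G.Adj s c) {i : ℕ} (hi : i < P.length)
    (hadj : G.Adj (P.getVert i) c) (hfirst : ∀ j < i, ¬ G.Adj (P.getVert j) c) :
    IsJump G w ((P.take i).concat hadj) := by
  obtain ⟨hw, hs, -, -, -, hind, hint⟩ := hP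
  have hprefix : ∀ z ∈ (P.take i).support, ∃ j ≤ i, P.getVert j = z := fun z hz => by
    obtain ⟨j, rfl, hj⟩ := Walk.mem_support_iff_exists_getVert.1 hz
    rw [Walk.take_length] at hj
    exact ⟨j, by omega, by rw [Walk.take_getVert, Nat.min_eq_right (by omega)]⟩
  have hprefix_int : ∀ z ∈ (P.take i).support, z ≠ s → z ∈ wInterior P := fun z hz hzs => by
    obtain ⟨j, hj, rfl⟩ := hprefix z hz
    refine ⟨P.getVert_mem_support j, hzs, fun hzt => ?_⟩
    have := (hind.1.getVert_eq_end_iff (by omega)).1 hzt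
    omega
  have hcP : c ∉ (P.take i).support := fun hcP =>
    hint c (hprefix_int c hcP hcs) hc
  refine ⟨hw, hs, hc, hcs.symm, hsc, (hind.take i).concat hadj hcP fun z hz hzc => ?_,
    fun z ⟨hz, hzs, hzc⟩ => ?_⟩
  · obtain ⟨j, hj, rfl⟩ := hprefix z hz
    obtain rfl | hji := hj.eq_or_lt
    · rfl
    · exact (hfirst j hji hzc).elim
  · rw [Walk.support_concat, List.mem_append, List.mem_singleton] at hz
    exact hint z (hprefix_int z (hz.resolve_right hzc) hzs)

lemma IsJump.isLocalJumpAcrossOne {P : G.Walk s t} (hP : IsJump G w P) {c b : V}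
    (hc : c ∈ w.support) (hsc : G.Adj s c) (hct : G.Adj c t) (hb : b ∈ wInterior P)
    (hcb : G.Adj c b)
    (huniq : ∀ a ∈ w.support, a ≠ s → a ≠ t → ∀ b ∈ wInterior P, G.Adj a b → a = c) :
    IsLocalJumpAcrossOne G w P := by
  have ⟨⟨hcyc, _, hchordless⟩, hs, ht, hst, _⟩ := hP
  have hedges : ∀ {Q1 Q2 : G.Walk s t}, ArcsOf G w Q1 Q2 → ∀ {x y}, G.Adj x y →
      x ∈ w.support → y ∈ w.support → s(x, y) ∈ Q1.edges ∨ s(x, y) ∈ Q2.edges := by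
    rintro Q1 Q2 ⟨-, -, -, -, -, -, hwQ⟩ x y hxy hx hy
    have hxyw : s(x, y) ∈ {e | e ∈ w.edges} := hchordless x hx y hy hxy
    rwa [hwQ] at hxyw
  suffices key : ∀ Q1 Q2 : G.Walk s t, ArcsOf G w Q1 Q2 → (∀ x ∈ Q2.support, x ∈ w.support) →
      s(s, c) ∈ Q1.edges → IsLocalJumpAcrossOne G w P by
    obtain ⟨Q1, Q2, hQ, -, hQ1w, hQ2w⟩ := hcyc.exists_arcsOf hs ht hst
    rcases hedges hQ hsc hs hc with h | h
    · exact key Q1 Q2 hQ hQ2w h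
    · exact key Q2 Q1 hQ.symm hQ1w h
  intro Q1 Q2 hQ hQ2w hscQ1
  have ⟨_, _, _, hQ1, _, hQsupp, _⟩ := hQ
  have hcQ1 : c ∈ Q1.support := Q1.snd_mem_support_of_mem_edges hscQ1
  have hcQ2 : c ∉ Q2.support := fun hcQ2 => by
    have hc' : c ∈ ({s, t} : Set V) := hQsupp ▸ ⟨hcQ1, hcQ2⟩
    rcases hc' with h | h
    exacts [hsc.ne h.symm, hct.ne h]
  have hctQ1 : s(c, t) ∈ Q1.edges := (hedges hQ hct hc ht).resolve_right fun h =>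
    hcQ2 (Q2.fst_mem_support_of_mem_edges h)
  refine ⟨Q1, Q2, ⟨hP, hQ, ⟨c, ⟨hcQ1, hsc.ne', hct.ne⟩, b, hb, hcb⟩, fun a ha b' hb' hab' => ?_⟩,
    hQ1.length_eq_two_of_mem_edges hscQ1 hctQ1⟩
  exact hcQ2 (huniq a (hQ2w a ha.1) ha.2.1 ha.2.2 b' hb' hab' ▸ ha.1)

def IsMinimumJump (G : SimpleGraph V) {v s t : V} (w : G.Walk v v) (P : G.Walk s t) : Prop :=
  IsJump G w P ∧ ∀ (s' t' : V) (J : G.Walk s' t'), IsJump G w J → P.length ≤ J.length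

lemma exists_isMinimumJump (h : ∃ (s t : V) (P : G.Walk s t), IsJump G w P) :
    ∃ (s t : V) (P : G.Walk s t), IsMinimumJump G w P := by
  classical
  have hn : ∃ n, ∃ (s t : V) (P : G.Walk s t), IsJump G w P ∧ P.length = n := by
    obtain ⟨s, t, P, hP⟩ := h
    exact ⟨_, s, t, P, hP, rfl⟩
  obtain ⟨s, t, P, hP, hlen⟩ := Nat.find_spec hn
  exact ⟨s, t, P, hP, fun s' t' J hJ => hlen ▸ Nat.find_min' hn ⟨s', t', J, hJ, rfl⟩⟩

lemma IsMinimumJump.reverse {P : G.Walk s t} (hP : IsMinimumJump G w P) :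
    IsMinimumJump G w P.reverse :=
  ⟨hP.1.reverse, fun s' t' J hJ => P.length_reverse ▸ hP.2 s' t' J hJ⟩

lemma IsMinimumJump.adj_end_of_adj_interior {P : G.Walk s t} (hP : IsMinimumJump G w P)
    {c b : V} (hc : c ∈ w.support) (hcs : c ≠ s) (hsc : ¬ G.Adj s c) (hb : b ∈ wInterior P)
    (hcb : G.Adj c b) : G.Adj b t := by
  classical
  obtain ⟨k, rfl, hk⟩ := Walk.mem_support_iff_exists_getVert.1 hb.1
  have hkP : k < P.length := hk.lt_of_ne fun h => hb.2.2 (h ▸ P.getVert_length)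
  have hex : ∃ i, G.Adj (P.getVert i) c := ⟨k, hcb.symm⟩
  have hfirst : Nat.find hex ≤ k := Nat.find_min' hex hcb.symm
  have hJ := hP.1.take_concat hc hcs hsc (hfirst.trans_lt hkP) (Nat.find_spec hex)
    fun j => Nat.find_min hex
  have hlen := hP.2 _ _ _ hJ
  rw [Walk.length_concat, Walk.take_length] at hlen
  obtain rfl : k = P.length - 1 := by omega
  have hlast := P.adj_getVert_succ (i := P.length - 1) (by omega)
  rwa [Nat.sub_add_cancel (by omega), Walk.getVert_length] at hlast

lemma IsMinimumJump.adj_ends_of_adj_interior {P : G.Walk s t} (hP : IsMinimumJump G w P)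
    (h3 : 3 < G.egirth) (hw : w.length + 4 < 2 * G.egirth) {c b : V} (hc : c ∈ w.support)
    (hcs : c ≠ s) (hct : c ≠ t) (hb : b ∈ wInterior P) (hcb : G.Adj c b) :
    G.Adj s c ∧ G.Adj c t := by
  obtain ⟨⟨hcyc, -⟩, hs, ht, hst, -, -, hint⟩ := hP.1
  have hbt : ¬ G.Adj s c → G.Adj b t := fun h => hP.adj_end_of_adj_interior hc hcs h hb hcb
  have hbs : ¬ G.Adj c t → G.Adj b s := fun h => hP.reverse.adj_end_of_adj_interior hc hct
    (fun h' => h h'.symm) (mem_wInterior_reverse.2 hb) hcb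
  by_cases hsc : G.Adj s c
  · refine ⟨hsc, by_contra fun hct' => ?_⟩
    exact not_le.2 h3 (egirth_le_three hsc hcb (hbs hct'))
  · by_cases hct' : G.Adj c t
    · exact (not_le.2 h3 (egirth_le_three hcb (hbt hsc) hct'.symm)).elim
    · exact (not_le.2 hw (hcyc.two_mul_egirth_le_length_add_four hs ht hst (hint b hb)
        (hbs hct') (hbt hsc))).elim

end Jumps

theorem jump_gives_short_or_one_vertex_jump_general {V : Type*}
    (l : ℕ) (hl : 4 ≤ l) (G : SimpleGraph V) (hG : MemGFam G l)
    {v : V} (w : G.Walk v v) (hw : IsOddHole G w)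
    (hjump : ∃ (s t : V) (P : G.Walk s t), IsJump G w P) :
    ∃ (s' t' : V) (P' : G.Walk s' t'),
      IsShortJump G w P' ∨ IsLocalJumpAcrossOne G w P' := by
  have hegirth : G.egirth = (2 * l + 1 : ℕ) := (ENat.toNat_eq_iff (by omega)).1 hG.1
  have hwlen : w.length < 2 * l + 3 := hG.2 v w hw
  obtain ⟨s, t, P, hP⟩ := exists_isMinimumJump hjump
  refine ⟨s, t, P, ?_⟩
  by_cases hatt : ∃ c ∈ w.support, c ≠ s ∧ c ≠ t ∧ ∃ b ∈ wInterior P, G.Adj c b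
  · obtain ⟨c, hc, hcs, hct, b, hb, hcb⟩ := hatt
    have hends : ∀ a ∈ w.support, a ≠ s → a ≠ t → ∀ b ∈ wInterior P, G.Adj a b →
        G.Adj s a ∧ G.Adj a t := fun a ha has hat b hb hab =>
      hP.adj_ends_of_adj_interior (by rw [hegirth]; norm_cast; omega)
        (by rw [hegirth]; norm_cast; omega) ha has hat hb hab
    obtain ⟨hsc, hct'⟩ := hends c hc hcs hct b hb hcb
    refine Or.inr (hP.1.isLocalJumpAcrossOne hc hsc hct' hb hcb
      fun a ha has hat b' hb' hab => by_contra fun hac => ?_)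
    obtain ⟨hsa, hat'⟩ := hends a ha has hat b' hb' hab
    obtain ⟨-, -, -, hst, -⟩ := hP.1
    have h4 := egirth_le_four hsc hct' hsa hat' hst (Ne.symm hac)
    rw [hegirth] at h4
    norm_cast at h4
    omega
  · exact Or.inl ⟨hP.1, fun a ha has hat b hb hab => hatt ⟨a, ha, has, hat, b, hb, hab⟩⟩

/-- If there is a jump over the odd hole `w`, then `G` contains a
short jump over `w` or a local jump over `w` across one vertex. -/
theorem jump_gives_short_or_one_vertex_jump {V : Type*} [Fintype V]
    (l : ℕ) (hl : 4 ≤ l) (G : SimpleGraph V) (hG : MemGFam G l)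
    {v : V} (w : G.Walk v v) (hw : IsOddHole G w)
    (hjump : ∃ (s t : V) (P : G.Walk s t), IsJump G w P) :
    ∃ (s' t' : V) (P' : G.Walk s' t'),
      IsShortJump G w P' ∨ IsLocalJumpAcrossOne G w P' :=
  jump_gives_short_or_one_vertex_jump_general l hl G hG w hw hjump
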